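/- Let F be a positive CNF formula with k variables and n ≥ 1 clauses (each clause a nonempty subset of the variables), where k is odd. Then the connected domination number of G_F satisfies γ_c(G_F) = 3k + 3n + 11. -/

import Mathlib

namespace CDG

/-- Vertices of the graph `B`. -/
inductive BVert : Type
  | a | e | b | b' | h | k | f1 | g1 | f2 | g2

/-- The edges of the graph `B`. -/
def BRel : BVert → BVert → Prop
  | .a, .e => True
  | .e, .b => True
  | .b, .b' => True
  | .a, .h => True
  | .h, .e => True
  | .e, .f1 => True
  | .f1, .b => True
  | .b, .f2 => True
  | .f2, .e => True
  | .e, .g1 => True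
  | .g1, .f1 => True
  | .e, .g2 => True
  | .g2, .f2 => True
  | .h, .k => True
  | .k, .a => True
  | _, _ => False

/-- The graph `B`. -/
def graphB : SimpleGraph BVert := SimpleGraph.fromRel BRel

/-- `S` is a connected dominating set of `G`: every vertex is in `S` or adjacent to a
vertex of `S`, and the subgraph induced by `S` is connected. -/
def IsConnDomSet {V : Type*} (G : SimpleGraph V) (S : Set V) : Prop :=
  (∀ v : V, v ∈ S ∨ ∃ u ∈ S, G.Adj u v) ∧ (G.induce S).Connected

/-- The connected domination number of `G`. -/
noncomputable def connDomNum {V : Type*} (G : SimpleGraph V) : ℕ :=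
  sInf {m | ∃ S : Set V, IsConnDomSet G S ∧ S.ncard = m}

/-- Vertices of the graph `H n`: `u i` is `u_i` for `0 ≤ i ≤ n+1`, `x t` is `x_{t+1}` and
`y t` is `y_{t+1}` for `0 ≤ t ≤ n-2`. -/
inductive HVert (n : ℕ) : Type
  | u : Fin (n + 2) → HVert n
  | x : Fin (n - 1) → HVert n
  | y : Fin (n - 1) → HVert n

/-- The edges of the graph `H n`. -/
def HRel (n : ℕ) : HVert n → HVert n → Prop
  | .u i, .u j => (j : ℕ) = (i : ℕ) + 1
  | .u i, .x t => (i : ℕ) = (t : ℕ) + 1 ∨ (i : ℕ) = (t : ℕ) + 2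
  | .x t, .y s => t = s
  | .y s, .u i => (i : ℕ) = (s : ℕ) + 2
  | _, _ => False

/-- The graph `H n`. -/
def graphH (n : ℕ) : SimpleGraph (HVert n) := SimpleGraph.fromRel (HRel n)

/-- Vertices of the graph `C m`: `cc i` is `c^{i+1}` and `dd i` is `d^{i+1}` for `0 ≤ i ≤ m-1`. -/
inductive CVert (m : ℕ) : Type
  | c : CVert m
  | d : CVert m
  | cc : Fin m → CVert m
  | dd : Fin m → CVert m

/-- The edges of the graph `C m`. -/
def CRel (m : ℕ) : CVert m → CVert m → Prop
  | .c, .d => True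
  | .c, .dd _ => True
  | .cc i, .dd j => i = j
  | _, _ => False

/-- The graph `C m`. -/
def graphC (m : ℕ) : SimpleGraph (CVert m) := SimpleGraph.fromRel (CRel m)

/-- Vertices of the graph `A`. -/
inductive AVert : Type
  | p1 | p2 | p3 | q1 | q2 | r1 | r2

/-- The edges of the graph `A`. -/
def ARel : AVert → AVert → Prop
  | .p1, .p2 => True
  | .p2, .p3 => True
  | .p1, .q1 => True
  | .q1, .r1 => True
  | .p2, .q1 => True
  | .p2, .r1 => True
  | .p2, .q2 => True
  | .q2, .r2 => True
  | .p3, .q2 => True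
  | .p3, .r2 => True
  | _, _ => False

/-- Vertices of the graph `G_F`, for a formula with `k` variables and `n` clauses:
`k` copies of `B`, `n` copies of `C n`, one copy of `H (2n+7)`, and a copy of `A`
exactly when `k` is odd (realized as `AVert × Fin (k % 2)`). -/
abbrev GVert (k n : ℕ) : Type :=
  (Fin k × BVert) ⊕ (Fin n × CVert n) ⊕ HVert (2 * n + 7) ⊕ (AVert × Fin (k % 2))

/-- The edges of the graph `G_F`, where the formula `F` assigns to each clause `j`
the (nonempty) set of variables appearing in it. -/
def GRel (k n : ℕ) (F : Fin n → Finset (Fin k)) : GVert k n → GVert k n → Prop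
  | .inl (i, v), .inl (i', w) => i = i' ∧ BRel v w
  | .inr (.inl (j, v)), .inr (.inl (j', w)) => j = j' ∧ CRel n v w
  | .inr (.inr (.inl v)), .inr (.inr (.inl w)) => HRel (2 * n + 7) v w
  | .inr (.inr (.inr (v, _))), .inr (.inr (.inr (w, _))) => ARel v w
  | .inr (.inl (j, v)), .inl (i, w) =>
      i ∈ F j ∧ w = .a ∧ (v = .c ∨ ∃ t, v = .cc t)
  | .inr (.inr (.inl v)), .inl (i, w) =>
      v = .u ⟨0, by omega⟩ ∧ (w = .a ∨ w = .b)
  | .inr (.inr (.inr (v, _))), .inr (.inr (.inl w)) =>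
      v = .p1 ∧ w = .u ⟨0, by omega⟩
  | _, _ => False

/-- The graph `G_F`. -/
def graphGF (k n : ℕ) (F : Fin n → Finset (Fin k)) : SimpleGraph (GVert k n) :=
  SimpleGraph.fromRel (GRel k n F)

/-- Vertices of the graph `G'_F`, for a formula with `k` variables and `n` clauses:
`k` copies of `B`, `n` copies of `C n`, one copy of `H 6`, and a copy of `A`
exactly when `k` is odd (realized as `AVert × Fin (k % 2)`). -/
abbrev GVert' (k n : ℕ) : Type :=
  (Fin k × BVert) ⊕ (Fin n × CVert n) ⊕ HVert 6 ⊕ (AVert × Fin (k % 2))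

/-- The edges of the graph `G'_F`. -/
def GRel' (k n : ℕ) (F : Fin n → Finset (Fin k)) : GVert' k n → GVert' k n → Prop
  | .inl (i, v), .inl (i', w) => i = i' ∧ BRel v w
  | .inr (.inl (j, v)), .inr (.inl (j', w)) => j = j' ∧ CRel n v w
  | .inr (.inr (.inl v)), .inr (.inr (.inl w)) => HRel 6 v w
  | .inr (.inr (.inr (v, _))), .inr (.inr (.inr (w, _))) => ARel v w
  | .inr (.inl (j, v)), .inl (i, w) =>
      i ∈ F j ∧ w = .a ∧ (v = .c ∨ ∃ t, v = .cc t)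
  | .inr (.inr (.inl v)), .inl (i, w) =>
      v = .u ⟨7, by omega⟩ ∧ (w = .a ∨ w = .b)
  | .inr (.inr (.inr (v, _))), .inr (.inr (.inl w)) =>
      v = .p1 ∧ w = .u ⟨7, by omega⟩
  | _, _ => False

/-- The graph `G'_F`. -/
def graphGF' (k n : ℕ) (F : Fin n → Finset (Fin k)) : SimpleGraph (GVert' k n) :=
  SimpleGraph.fromRel (GRel' k n F)

/-!
Upper bound: `a, e, b` in every `B_i`, `c` in every `C_j`, the path `u_0 … u_{2n+7}` and
`p_1, p_2, p_3` form a connected dominating set with `3k + n + (2n + 8) + 3` vertices; every vertex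
other than `u_0` has a neighbour in this set that is closer to `u_0`.

Lower bound: a connected dominating set `S` meets the pairwise disjoint closed neighbourhoods of
`b', k, g^1` in each `B_i`, of `d` in each `C_j`, and of `r_1, r_2` in `A`. Since `p_1 u_0` is the
only edge leaving `A`, `S` contains `p_1` and `u_0`; and since `S` must also dominate `u_{2n+8}`,
it connects `u_0` to level `2n + 8` of `H_{2n+7}` and so meets each of its `2n + 8` levels.
-/

open Finset

deriving instance DecidableEq for BVert
instance : Fintype BVert :=
  ⟨{.a, .e, .b, .b', .h, .k, .f1, .g1, .f2, .g2}, fun x => by cases x <;> decide⟩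
deriving instance DecidableEq, Fintype for CVert
deriving instance DecidableEq, Fintype for HVert
deriving instance DecidableEq for AVert
instance : Fintype AVert :=
  ⟨{.p1, .p2, .p3, .q1, .q2, .r1, .r2}, fun x => by cases x <;> decide⟩

section ConnDomSet

variable {V : Type*} {G : SimpleGraph V} {S : Set V}

theorem IsConnDomSet.exists_mem_insert_neighborSet (hS : IsConnDomSet G S) (v : V) :
    ∃ u ∈ S, u ∈ insert v (G.neighborSet v) := by
  rcases hS.1 v with hv | ⟨u, hu, huv⟩
  · exact ⟨v, hv, Set.mem_insert v _⟩
  · exact ⟨u, hu, Set.mem_insert_of_mem v huv.symm⟩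

/-- `S` contains the root `r` and the inner vertices of a spanning tree of `G` along which `f`
decreases towards `r`. -/
theorem isConnDomSet_of_exists_adj_lt (f : V → ℕ) {r : V} (hr : r ∈ S)
    (hparent : ∀ v, v ≠ r → ∃ u ∈ S, G.Adj u v ∧ f u < f v) : IsConnDomSet G S := by
  have reach : ∀ v : S, (G.induce S).Reachable v ⟨r, hr⟩ := by
    intro v
    induction hv : f v using Nat.strong_induction_on generalizing v with
    | _ m ih =>
      by_cases hvr : v.1 = r
      · rw [show v = ⟨r, hr⟩ from Subtype.ext hvr]
      obtain ⟨u, hu, huv, hfu⟩ := hparent v hvr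
      exact (SimpleGraph.Adj.reachable (G := G.induce S) (u := v) (v := ⟨u, hu⟩) huv.symm).trans
        (ih _ (hv ▸ hfu) _ rfl)
  refine ⟨fun v => ?_, (SimpleGraph.connected_iff_exists_forall_reachable _).2
    ⟨⟨r, hr⟩, fun v => (reach v).symm⟩⟩
  by_cases hvr : v = r
  · exact .inl (hvr ▸ hr)
  · obtain ⟨u, hu, huv, -⟩ := hparent v hvr
    exact .inr ⟨u, hu, huv⟩

theorem exists_adj_of_induce_connected (hS : (G.induce S).Connected) (X : Set V) {a b : V}
    (ha : a ∈ S) (hb : b ∈ S) (haX : a ∈ X) (hbX : b ∉ X) :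
    ∃ x ∈ S, ∃ y ∈ S, x ∈ X ∧ y ∉ X ∧ G.Adj x y := by
  obtain ⟨w⟩ := hS.preconnected ⟨a, ha⟩ ⟨b, hb⟩
  obtain ⟨d, -, hd₁, hd₂⟩ := w.exists_boundary_dart (Subtype.val ⁻¹' X) haX hbX
  exact ⟨_, d.fst.2, _, d.snd.2, hd₁, hd₂, d.adj⟩

theorem _root_.SimpleGraph.Walk.exists_mem_support_eq {a b : V} (w : G.Walk a b) (f : V → ℕ)
    (hf : ∀ x y, G.Adj x y → f y ≤ f x + 1) {m : ℕ} (ham : f a ≤ m) (hmb : m ≤ f b) :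
    ∃ v ∈ w.support, f v = m := by
  induction w with
  | nil => exact ⟨_, SimpleGraph.Walk.start_mem_support _, le_antisymm ham hmb⟩
  | @cons x y z hxy p ih =>
    rcases ham.eq_or_lt with rfl | hlt
    · exact ⟨x, (p.cons hxy).start_mem_support, rfl⟩
    · obtain ⟨v, hv, rfl⟩ := ih (by have := hf x y hxy; omega) hmb
      exact ⟨v, by simp [hv], rfl⟩

theorem Icc_subset_image_of_induce_connected (hS : (G.induce S).Connected) (f : V → ℕ)
    (hf : ∀ x y, G.Adj x y → f y ≤ f x + 1) {a b : V} (ha : a ∈ S) (hb : b ∈ S) :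
    Set.Icc (f a) (f b) ⊆ f '' S := by
  rintro m ⟨ham, hmb⟩
  obtain ⟨w⟩ := hS.preconnected ⟨a, ha⟩ ⟨b, hb⟩
  obtain ⟨v, -, hv⟩ := w.exists_mem_support_eq (f ∘ Subtype.val) (fun x y => hf x y) ham hmb
  exact ⟨v, v.2, hv⟩

theorem connDomNum_eq_of_forall_le [Fintype V] {m : ℕ}
    (hex : ∃ S : Finset V, IsConnDomSet G S ∧ S.card = m)
    (hle : ∀ S : Finset V, IsConnDomSet G S → m ≤ S.card) : connDomNum G = m := by
  classical
  obtain ⟨S₀, hS₀, rfl⟩ := hex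
  refine le_antisymm (Nat.sInf_le ⟨S₀, hS₀, Set.ncard_coe_finset S₀⟩) ?_
  refine le_csInf ⟨_, S₀, hS₀, Set.ncard_coe_finset S₀⟩ ?_
  rintro _ ⟨S, hS, rfl⟩
  rw [Set.ncard_eq_toFinset_card']
  exact hle _ (by rwa [Set.coe_toFinset])

end ConnDomSet

section Neighborhoods

variable {k n : ℕ} {F : Fin n → Finset (Fin k)}

instance : Subsingleton (Fin (k % 2)) :=
  Fin.subsingleton_iff_le_one.2 (Nat.le_of_lt_succ (Nat.mod_lt _ two_pos))

def u0 : GVert k n := .inr (.inr (.inl (.u 0)))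

lemma neighborSet_b' (i : Fin k) :
    (graphGF k n F).neighborSet (.inl (i, .b')) = {.inl (i, .b)} := by
  ext u
  rcases u with ⟨i', v⟩ | ⟨j, v⟩ | v | ⟨v, z⟩ <;> cases v <;>
    simp [graphGF, GRel, BRel, eq_comm]

lemma neighborSet_k (i : Fin k) :
    (graphGF k n F).neighborSet (.inl (i, .k)) = {.inl (i, .a), .inl (i, .h)} := by
  ext u
  rcases u with ⟨i', v⟩ | ⟨j, v⟩ | v | ⟨v, z⟩ <;> cases v <;>
    simp [graphGF, GRel, BRel, eq_comm]

lemma neighborSet_g1 (i : Fin k) :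
    (graphGF k n F).neighborSet (.inl (i, .g1)) = {.inl (i, .e), .inl (i, .f1)} := by
  ext u
  rcases u with ⟨i', v⟩ | ⟨j, v⟩ | v | ⟨v, z⟩ <;> cases v <;>
    simp [graphGF, GRel, BRel, eq_comm]

lemma neighborSet_d (j : Fin n) :
    (graphGF k n F).neighborSet (.inr (.inl (j, .d))) = {.inr (.inl (j, .c))} := by
  ext u
  rcases u with ⟨i', v⟩ | ⟨j, v⟩ | v | ⟨v, z⟩ <;> cases v <;> simp [graphGF, GRel, CRel]

lemma neighborSet_u_last :
    (graphGF k n F).neighborSet (.inr (.inr (.inl (.u (Fin.last _))))) =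
      {.inr (.inr (.inl (.u (Fin.last _).castSucc)))} := by
  ext u
  rcases u with ⟨i', v⟩ | ⟨j, v⟩ | v | ⟨v, z⟩ <;> cases v <;>
    simp [graphGF, GRel, HRel, Fin.ext_iff] <;> omega

lemma neighborSet_r1 (z : Fin (k % 2)) :
    (graphGF k n F).neighborSet (.inr (.inr (.inr (.r1, z)))) =
      {.inr (.inr (.inr (.p2, z))), .inr (.inr (.inr (.q1, z)))} := by
  ext u
  rcases u with ⟨i', v⟩ | ⟨j, v⟩ | v | ⟨v, z⟩ <;> cases v <;>
    simp [graphGF, GRel, ARel, eq_iff_true_of_subsingleton]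

lemma neighborSet_r2 (z : Fin (k % 2)) :
    (graphGF k n F).neighborSet (.inr (.inr (.inr (.r2, z)))) =
      {.inr (.inr (.inr (.p3, z))), .inr (.inr (.inr (.q2, z)))} := by
  ext u
  rcases u with ⟨i', v⟩ | ⟨j, v⟩ | v | ⟨v, z⟩ <;> cases v <;>
    simp [graphGF, GRel, ARel, eq_iff_true_of_subsingleton]

end Neighborhoods

section Gadgets

variable {k n : ℕ} {F : Fin n → Finset (Fin k)}

def gadget : GVert k n → Fin k ⊕ Fin n ⊕ Unit ⊕ Unit
  | .inl (i, _) => .inl i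
  | .inr (.inl (j, _)) => .inr (.inl j)
  | .inr (.inr (.inl _)) => .inr (.inr (.inl ()))
  | .inr (.inr (.inr _)) => .inr (.inr (.inr ()))

def height : GVert k n → ℕ
  | .inr (.inr (.inl (.u i))) => i + 1
  | .inr (.inr (.inl (.x t))) => t + 2
  | .inr (.inr (.inl (.y t))) => t + 3
  | _ => 0

lemma gadget_eq_of_height_pos {v : GVert k n} (h : 0 < height v) :
    gadget v = .inr (.inr (.inl ())) := by
  rcases v with ⟨i, w⟩ | ⟨j, w⟩ | w | ⟨w, z⟩ <;> simp_all [height, gadget]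

lemma height_le_succ_of_adj {v w : GVert k n} (h : (graphGF k n F).Adj v w) :
    height w ≤ height v + 1 := by
  rcases w with ⟨i', w⟩ | ⟨j', w⟩ | (w | w | w) | ⟨w, z'⟩ <;>
    simp only [height, zero_le] <;>
    rcases v with ⟨i, v⟩ | ⟨j, v⟩ | (v | v | v) | ⟨v, z⟩ <;>
    simp_all [graphGF, GRel, HRel] <;> omega

lemma eq_p1_and_eq_u0_of_adj {x y : GVert k n} (h : (graphGF k n F).Adj x y)
    (hx : gadget x = .inr (.inr (.inr ()))) (hy : gadget y ≠ .inr (.inr (.inr ()))) :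
    (∃ z, x = .inr (.inr (.inr (.p1, z)))) ∧ y = u0 := by
  rcases x with ⟨i, v⟩ | ⟨j, v⟩ | v | ⟨v, z⟩ <;>
    rcases y with ⟨i', w⟩ | ⟨j', w⟩ | w | ⟨w, z'⟩ <;>
    simp_all [gadget, graphGF, GRel, u0]

end Gadgets

section UpperBound

variable {k n : ℕ} {F : Fin n → Finset (Fin k)}

/-- `a_i, e_i, b_i` in every `B_i`, `c_j` in every `C_j`, the path `u_0, …, u_{2n+7}`,
and `p_1, p_2, p_3`. -/
def canonicalCDS (k n : ℕ) : Finset (GVert k n) :=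
  (univ ×ˢ ({.a, .e, .b} : Finset BVert)).disjSum ((univ ×ˢ ({.c} : Finset (CVert n))).disjSum
    ((univ.image fun i : Fin (2 * n + 8) => HVert.u i.castSucc).disjSum
      (({.p1, .p2, .p3} : Finset AVert) ×ˢ univ)))

lemma card_canonicalCDS (hk : Odd k) : (canonicalCDS k n).card = 3 * k + 3 * n + 11 := by
  have hH : (univ.image fun i : Fin (2 * n + 8) => HVert.u i.castSucc).card = 2 * n + 8 := by
    rw [card_image_of_injective _ fun _ _ h => Fin.castSucc_injective _ (HVert.u.inj h)]
    simp
  simp [canonicalCDS, card_disjSum, card_product, hH, Nat.odd_iff.1 hk]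
  ring

/-- Depth in a spanning tree of `graphGF` rooted at `u_0` whose inner vertices lie in
`canonicalCDS`. -/
def depth : GVert k n → ℕ
  | .inl (_, .a) | .inl (_, .b) => 1
  | .inl (_, .e) => 2
  | .inl _ => 3
  | .inr (.inl (_, .c)) => 2
  | .inr (.inl _) => 3
  | .inr (.inr (.inl (.u i))) => i
  | .inr (.inr (.inl _)) => 2 * n + 9
  | .inr (.inr (.inr (.p1, _))) => 1
  | .inr (.inr (.inr (.p2, _))) => 2
  | .inr (.inr (.inr (.p3, _))) => 3
  | .inr (.inr (.inr _)) => 4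

section

attribute [local simp] canonicalCDS depth u0 graphGF GRel BRel CRel HRel ARel

lemma exists_adj_depth_lt (hF : ∀ j, (F j).Nonempty) (v : GVert k n) (hv : v ≠ u0) :
    ∃ u ∈ canonicalCDS k n, (graphGF k n F).Adj u v ∧ depth u < depth v := by
  rcases v with ⟨i, v⟩ | ⟨j, v⟩ | v | ⟨v, z⟩
  · cases v
    case a | b => use u0; simp
    case e | h | k => use .inl (i, .a); simp
    case f1 | g1 | f2 | g2 => use .inl (i, .e); simp
    case b' => use .inl (i, .b); simp
  · obtain ⟨i, hi⟩ := hF j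
    cases v
    case c | cc => use .inl (i, .a); simpa
    case d | dd => use .inr (.inl (j, .c)); simp
  · cases v
    case u i =>
      obtain ⟨i, rfl⟩ := Fin.exists_succ_eq.2 (show i ≠ 0 by rintro rfl; exact hv rfl)
      use .inr (.inr (.inl (.u i.castSucc))); simp [Fin.ext_iff]
    case x t =>
      use .inr (.inr (.inl (.u ⟨t + 1, by omega⟩)))
      simpa [Fin.ext_iff] using ⟨⟨⟨t + 1, by omega⟩, rfl⟩, by omega⟩
    case y t =>
      use .inr (.inr (.inl (.u ⟨t + 2, by omega⟩)))
      simpa [Fin.ext_iff] using ⟨⟨⟨t + 2, by omega⟩, rfl⟩, by omega⟩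
  · cases v
    case p1 => use u0; simp
    case p2 => use .inr (.inr (.inr (.p1, z))); simp
    case p3 | q1 | r1 | q2 => use .inr (.inr (.inr (.p2, z))); simp
    case r2 => use .inr (.inr (.inr (.p3, z))); simp

end

lemma isConnDomSet_canonicalCDS (hF : ∀ j, (F j).Nonempty) :
    IsConnDomSet (graphGF k n F) (canonicalCDS k n) :=
  isConnDomSet_of_exists_adj_lt depth (r := u0) (by simp [u0, canonicalCDS]) fun v hv => by
    simpa using exists_adj_depth_lt hF v hv

end UpperBound

section LowerBound

variable {k n : ℕ} {F : Fin n → Finset (Fin k)} {S : Finset (GVert k n)}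

lemma two_lt_card_fiber_B (hS : IsConnDomSet (graphGF k n F) S) (i : Fin k) :
    2 < (S.filter (gadget · = .inl i)).card := by
  obtain ⟨x, hx, hxN⟩ := hS.exists_mem_insert_neighborSet (.inl (i, .b'))
  obtain ⟨y, hy, hyN⟩ := hS.exists_mem_insert_neighborSet (.inl (i, .k))
  obtain ⟨z, hz, hzN⟩ := hS.exists_mem_insert_neighborSet (.inl (i, .g1))
  simp only [neighborSet_b', neighborSet_k, neighborSet_g1, Set.mem_insert_iff,
    Set.mem_singleton_iff] at hxN hyN hzN
  refine two_lt_card.2 ⟨x, ?_, y, ?_, z, ?_⟩ <;> simp only [mem_filter] <;>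
    rcases hxN with rfl | rfl <;> rcases hyN with rfl | rfl | rfl <;>
    rcases hzN with rfl | rfl | rfl <;> simp_all [gadget]

lemma card_fiber_C_pos (hS : IsConnDomSet (graphGF k n F) S) (j : Fin n) :
    0 < (S.filter (gadget · = .inr (.inl j))).card := by
  obtain ⟨x, hx, hxN⟩ := hS.exists_mem_insert_neighborSet (.inr (.inl (j, .d)))
  simp only [neighborSet_d, Set.mem_insert_iff, Set.mem_singleton_iff] at hxN
  refine card_pos.2 ⟨x, mem_filter.2 ⟨hx, ?_⟩⟩
  rcases hxN with rfl | rfl <;> rfl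

lemma exists_mem_le_height (hS : IsConnDomSet (graphGF k n F) S) :
    ∃ v ∈ S, 2 * n + 8 ≤ height v := by
  obtain ⟨x, hx, hxN⟩ := hS.exists_mem_insert_neighborSet (.inr (.inr (.inl (.u (Fin.last _)))))
  simp only [neighborSet_u_last, Set.mem_insert_iff, Set.mem_singleton_iff] at hxN
  refine ⟨x, hx, ?_⟩
  rcases hxN with rfl | rfl <;> simp [height]

lemma exists_mem_A (hS : IsConnDomSet (graphGF k n F) S) (z : Fin (k % 2)) :
    ∃ v ∈ S, gadget v = .inr (.inr (.inr ())) := by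
  obtain ⟨x, hx, hxN⟩ := hS.exists_mem_insert_neighborSet (.inr (.inr (.inr (.r1, z))))
  refine ⟨x, hx, ?_⟩
  simp only [neighborSet_r1, Set.mem_insert_iff, Set.mem_singleton_iff] at hxN
  rcases hxN with rfl | rfl | rfl <;> rfl

/-- `p_1 u_0` is the only edge leaving `A`, so a connected `S` meeting `A` and `H` contains it. -/
lemma u0_mem_and_exists_p1_mem (hS : IsConnDomSet (graphGF k n F) S) (z : Fin (k % 2)) :
    u0 ∈ S ∧ ∃ z', (.inr (.inr (.inr (.p1, z'))) : GVert k n) ∈ S := by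
  obtain ⟨a, ha, haA⟩ := exists_mem_A hS z
  obtain ⟨b, hb, hbH⟩ := exists_mem_le_height hS
  obtain ⟨x, hx, y, hy, hxA, hyA, hxy⟩ := exists_adj_of_induce_connected hS.2
    {v | gadget v = .inr (.inr (.inr ()))} ha hb haA
    (show gadget b ≠ _ by rw [gadget_eq_of_height_pos (by omega)]; simp)
  obtain ⟨⟨z', rfl⟩, rfl⟩ := eq_p1_and_eq_u0_of_adj hxy hxA hyA
  exact ⟨hy, z', hx⟩

/-- A walk inside `S` from `u_0` to the top of `H_{2n+7}` passes through every level. -/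
lemma le_card_fiber_H (hS : IsConnDomSet (graphGF k n F) S) (z : Fin (k % 2)) :
    2 * n + 8 ≤ (S.filter (gadget · = .inr (.inr (.inl ())))).card := by
  obtain ⟨v, hv, hvH⟩ := exists_mem_le_height hS
  have hIcc := Icc_subset_image_of_induce_connected hS.2 height
    (fun _ _ => height_le_succ_of_adj) (u0_mem_and_exists_p1_mem hS z).1 hv
  calc 2 * n + 8 = (Icc 1 (2 * n + 8)).card := by simp
    _ ≤ ((S.filter (gadget · = .inr (.inr (.inl ())))).image height).card := by
      refine card_le_card fun m hm => ?_
      rw [mem_Icc] at hm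
      obtain ⟨w, hw, rfl⟩ := hIcc ⟨by simpa [u0, height] using hm.1, hm.2.trans hvH⟩
      exact mem_image_of_mem _ (mem_filter.2 ⟨hw, gadget_eq_of_height_pos (by omega)⟩)
    _ ≤ _ := card_image_le

lemma two_lt_card_fiber_A (hS : IsConnDomSet (graphGF k n F) S) (z : Fin (k % 2)) :
    2 < (S.filter (gadget · = .inr (.inr (.inr ())))).card := by
  obtain ⟨-, z', hp1⟩ := u0_mem_and_exists_p1_mem hS z
  obtain ⟨x, hx, hxN⟩ := hS.exists_mem_insert_neighborSet (.inr (.inr (.inr (.r1, z))))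
  obtain ⟨y, hy, hyN⟩ := hS.exists_mem_insert_neighborSet (.inr (.inr (.inr (.r2, z))))
  simp only [neighborSet_r1, neighborSet_r2, Set.mem_insert_iff, Set.mem_singleton_iff] at hxN hyN
  refine two_lt_card.2 ⟨_, mem_filter.2 ⟨hp1, rfl⟩, x, ?_, y, ?_⟩ <;>
    simp only [mem_filter] <;>
    rcases hxN with rfl | rfl | rfl <;> rcases hyN with rfl | rfl | rfl <;> simp_all [gadget]

theorem le_card_of_isConnDomSet (hk : Odd k) (hS : IsConnDomSet (graphGF k n F) S) :
    3 * k + 3 * n + 11 ≤ S.card := by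
  have z : Fin (k % 2) := ⟨0, by rw [Nat.odd_iff.1 hk]; omega⟩
  rw [card_eq_sum_card_fiberwise fun v _ => mem_univ (gadget v)]
  simp only [Fintype.sum_sum_type, Fintype.sum_unique]
  have hB := card_nsmul_le_sum univ _ 3 fun i _ => two_lt_card_fiber_B hS i
  have hC := card_nsmul_le_sum univ _ 1 fun j _ => card_fiber_C_pos hS j
  have hH := le_card_fiber_H hS z
  have hA := two_lt_card_fiber_A hS z
  simp only [card_univ, Fintype.card_fin, smul_eq_mul] at hB hC
  linarith

end LowerBound

theorem connDomNum_graphGF_of_odd_general (k n : ℕ) (hkodd : Odd k)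
    (F : Fin n → Finset (Fin k)) (hF : ∀ j, (F j).Nonempty) :
    connDomNum (graphGF k n F) = 3 * k + 3 * n + 11 :=
  connDomNum_eq_of_forall_le
    ⟨canonicalCDS k n, isConnDomSet_canonicalCDS hF, card_canonicalCDS hkodd⟩
    fun _ hS => le_card_of_isConnDomSet hkodd hS

theorem connDomNum_graphGF_of_odd (k n : ℕ) (hkodd : Odd k)
    (hn : 1 ≤ n) (F : Fin n → Finset (Fin k)) (hF : ∀ j, (F j).Nonempty) :
    connDomNum (graphGF k n F) = 3 * k + 3 * n + 11 :=
  connDomNum_graphGF_of_odd_general k n hkodd F hF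

end CDG
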